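/- arXiv:quant-ph/0201139 — 3 statements merged into one kernel-verified Lean document; each statement's English description precedes it below -/
import Mathlib

section
/- Let Π be an orthogonal projection on a finite-dimensional complex inner product space, and let μ, μ' be unit vectors with ‖Πμ‖² ≥ 1/2 + ε and ‖Πμ'‖² ≤ 1/2 − ε for some ε ∈ (0, 1/2]. Then ‖μ − μ'‖ ≥ 2ε. -/
set_option maxHeartbeats 800000


theorem projection_separation
    {V : Type*} [NormedAddCommGroup V] [InnerProductSpace ℂ V]
    [FiniteDimensional ℂ V] (K : Submodule ℂ V)
    (μ μ' : V) (hμ : ‖μ‖ = 1) (hμ' : ‖μ'‖ = 1)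
    (ε : ℝ) (hε : ε ∈ Set.Ioc (0 : ℝ) (1 / 2))
    (hA : (1 : ℝ) / 2 + ε ≤ ‖(K.orthogonalProjectionOnto μ : V)‖ ^ 2)
    (hR : ‖(K.orthogonalProjectionOnto μ' : V)‖ ^ 2 ≤ 1 / 2 - ε) :
    2 * ε ≤ ‖μ - μ'‖ := by
  obtain ⟨hε0, hε12⟩ := hε
  set a := ‖(K.orthogonalProjectionOnto μ : V)‖ with ha
  set b := ‖(K.orthogonalProjectionOnto μ' : V)‖ with hb
  set s := ‖(Kᗮ.orthogonalProjectionOnto μ : V)‖ with hs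
  set t := ‖(Kᗮ.orthogonalProjectionOnto μ' : V)‖ with ht
  have h1 : a ^ 2 + s ^ 2 = 1 := by
    have h := Submodule.norm_sq_eq_add_norm_sq_projection μ K
    rw [hμ, one_pow, ← Submodule.norm_coe, ← Submodule.norm_coe] at h
    exact h.symm
  have h2 : b ^ 2 + t ^ 2 = 1 := by
    have h := Submodule.norm_sq_eq_add_norm_sq_projection μ' K
    rw [hμ', one_pow, ← Submodule.norm_coe, ← Submodule.norm_coe] at h
    exact h.symm
  have ha0 : 0 ≤ a := norm_nonneg _
  have hb0 : 0 ≤ b := norm_nonneg _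
  have hs0 : 0 ≤ s := norm_nonneg _
  have ht0 : 0 ≤ t := norm_nonneg _
  have hat : 1 / 2 + ε ≤ a * t := by
    have ht2 : 1 / 2 + ε ≤ t ^ 2 := by nlinarith
    have h1' : (1 / 2 + ε) ^ 2 ≤ (a * t) ^ 2 := by nlinarith
    nlinarith [mul_nonneg ha0 ht0]
  have hbs : b * s ≤ 1 / 2 - ε := by
    have hs2 : s ^ 2 ≤ 1 / 2 - ε := by nlinarith
    nlinarith [mul_nonneg hb0 hs0, sq_nonneg (b - s)]
  have hkey : a * b + s * t ≤ 1 - 2 * ε ^ 2 := by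
    have hid : (a * b + s * t) ^ 2 + (a * t - b * s) ^ 2 = 1 := by
      have : (a * b + s * t) ^ 2 + (a * t - b * s) ^ 2
          = (a ^ 2 + s ^ 2) * (b ^ 2 + t ^ 2) := by ring
      rw [this, h1, h2, one_mul]
    have hd : 2 * ε ≤ a * t - b * s := by linarith
    have h3 : (2 * ε) ^ 2 ≤ (a * t - b * s) ^ 2 := by
      have := pow_le_pow_left₀ (by linarith : (0:ℝ) ≤ 2 * ε) hd 2
      linarith
    have h4 : (a * b + s * t) ^ 2 ≤ 1 - (2 * ε) ^ 2 := by linarith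
    have habst : 0 ≤ a * b + s * t := add_nonneg (mul_nonneg ha0 hb0) (mul_nonneg hs0 ht0)
    nlinarith [h4, habst, sq_nonneg (ε ^ 2)]
  -- Pythagoras for μ - μ'
  have hpyth : ‖μ - μ'‖ ^ 2 =
      ‖(K.orthogonalProjectionOnto (μ - μ') : V)‖ ^ 2 +
      ‖(Kᗮ.orthogonalProjectionOnto (μ - μ') : V)‖ ^ 2 :=
    Submodule.norm_sq_eq_add_norm_sq_projection (μ - μ') K
  have hd1 : (a - b) ^ 2 ≤ ‖(K.orthogonalProjectionOnto (μ - μ') : V)‖ ^ 2 := by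
    have : ‖(K.orthogonalProjectionOnto (μ - μ') : V)‖ =
        ‖(K.orthogonalProjectionOnto μ : V) - (K.orthogonalProjectionOnto μ' : V)‖ := by
      rw [map_sub]; rfl
    rw [this]
    have h := abs_norm_sub_norm_le (K.orthogonalProjectionOnto μ : V)
      (K.orthogonalProjectionOnto μ' : V)
    calc (a - b) ^ 2 = |a - b| ^ 2 := (sq_abs _).symm
      _ ≤ _ := by apply pow_le_pow_left₀ (abs_nonneg _) h
  have hd2 : (t - s) ^ 2 ≤ ‖(Kᗮ.orthogonalProjectionOnto (μ - μ') : V)‖ ^ 2 := by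
    have : ‖(Kᗮ.orthogonalProjectionOnto (μ - μ') : V)‖ =
        ‖(Kᗮ.orthogonalProjectionOnto μ : V) - (Kᗮ.orthogonalProjectionOnto μ' : V)‖ := by
      rw [map_sub]; rfl
    rw [this]
    have h := abs_norm_sub_norm_le (Kᗮ.orthogonalProjectionOnto μ : V)
      (Kᗮ.orthogonalProjectionOnto μ' : V)
    calc (t - s) ^ 2 = |s - t| ^ 2 := by rw [← sq_abs]; rw [abs_sub_comm]
      _ ≤ _ := by apply pow_le_pow_left₀ (abs_nonneg _) h
  have hsq : (2 * ε) ^ 2 ≤ ‖μ - μ'‖ ^ 2 := by nlinarith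
  nlinarith [norm_nonneg (μ - μ'), hε0]
end

section
/- Let a = diag(e^{iπ/5}, e^{−iπ/5}) and b = R_y(arctan 2) · a · R_y(−arctan 2), where R_y(α) = [[cos(α/2), −sin(α/2)], [sin(α/2), cos(α/2)]]. Let c = a·b·a. Then, with e₊ = (1,i)/√2 and e₋ = (1,−i)/√2, one has |⟨e₊, c e₋⟩|² = 1. -/
open Complex

noncomputable def ePlus : Fin 2 → ℂ := ![1 / Real.sqrt 2, I / Real.sqrt 2]
noncomputable def eMinus : Fin 2 → ℂ := ![1 / Real.sqrt 2, -I / Real.sqrt 2]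

noncomputable def Ry (α : ℝ) : Matrix (Fin 2) (Fin 2) ℂ :=
  !![(Real.cos (α / 2) : ℂ), -(Real.sin (α / 2) : ℂ);
     (Real.sin (α / 2) : ℂ), (Real.cos (α / 2) : ℂ)]

noncomputable def aRot : Matrix (Fin 2) (Fin 2) ℂ :=
  !![Complex.exp (I * (Real.pi / 5)), 0; 0, Complex.exp (-I * (Real.pi / 5))]

noncomputable def bRot : Matrix (Fin 2) (Fin 2) ℂ :=
  Ry (Real.arctan 2) * aRot * Ry (-Real.arctan 2)

noncomputable def cRot : Matrix (Fin 2) (Fin 2) ℂ := aRot * bRot * aRot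

set_option maxHeartbeats 4000000 in
set_option maxRecDepth 8000 in
theorem c_maps_eMinus_to_ePlus :
    ‖∑ i, (starRingEnd ℂ) (ePlus i) * cRot.mulVec eMinus i‖ ^ 2 = 1 := by
  have e1 : Complex.exp (Complex.I * ((Real.pi : ℂ) / 5)) =
      ((Real.cos (Real.pi / 5) : ℝ) : ℂ) + ((Real.sin (Real.pi / 5) : ℝ) : ℂ) * Complex.I := by
    rw [show Complex.I * ((Real.pi : ℂ) / 5) = ((Real.pi / 5 : ℝ) : ℂ) * Complex.I by
      push_cast; ring, Complex.exp_mul_I, ← Complex.ofReal_cos, ← Complex.ofReal_sin]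
  have e2 : Complex.exp (-Complex.I * ((Real.pi : ℂ) / 5)) =
      ((Real.cos (Real.pi / 5) : ℝ) : ℂ) - ((Real.sin (Real.pi / 5) : ℝ) : ℂ) * Complex.I := by
    rw [show -Complex.I * ((Real.pi : ℂ) / 5) = ((-(Real.pi / 5) : ℝ) : ℂ) * Complex.I by
      push_cast; ring, Complex.exp_mul_I, ← Complex.ofReal_cos, ← Complex.ofReal_sin,
      Real.cos_neg, Real.sin_neg, Complex.ofReal_neg]
    ring
  have h3 : (1 : ℂ) / (Real.sqrt 2 : ℂ) = (((Real.sqrt 2)⁻¹ : ℝ) : ℂ) := by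
    push_cast; ring
  have h4 : Complex.I / (Real.sqrt 2 : ℂ) = (((Real.sqrt 2)⁻¹ : ℝ) : ℂ) * Complex.I := by
    push_cast; ring
  simp only [Fin.sum_univ_two, Matrix.mulVec, dotProduct, cRot, bRot, aRot, Ry,
    ePlus, eMinus, Matrix.mul_apply, Matrix.cons_val', Matrix.cons_val_zero, Matrix.cons_val_one,
    Matrix.head_cons, Matrix.empty_val', Matrix.cons_val_fin_one, Matrix.head_fin_const,
    Matrix.of_apply, e1, e2, h3, h4,
    Real.cos_neg, Real.sin_neg, neg_div, Complex.ofReal_neg, map_mul, Complex.conj_ofReal,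
    mul_zero, zero_mul, add_zero, zero_add, mul_one, one_mul, neg_neg,
    Complex.conj_I]
  set a := Real.cos (Real.pi / 5) with ha'
  set b := Real.sin (Real.pi / 5) with hb'
  set c := Real.cos (Real.arctan 2 / 2) with hc'
  set s := Real.sin (Real.arctan 2 / 2) with hs'
  set w := (Real.sqrt 2)⁻¹ with hw'
  set r := Real.sqrt 5 with hr'
  have hr : r ^ 2 = 5 := Real.sq_sqrt (by norm_num)
  have hrpos : 0 < r := Real.sqrt_pos.mpr (by norm_num)
  have hw : w ^ 2 = 1 / 2 := by
    rw [hw', inv_pow, Real.sq_sqrt (by norm_num : (0:ℝ) ≤ 2)]; norm_num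
  have ha : a = (1 + r) / 4 := by
    rw [ha', hr', Real.cos_pi_div_five]
  have hb : b ^ 2 = 1 - a ^ 2 := by rw [hb', ha', Real.sin_sq]
  have hct : Real.cos (Real.arctan 2) = r / 5 := by
    rw [Real.cos_arctan, hr']
    rw [show (1 : ℝ) + 2 ^ 2 = 5 by norm_num]
    rw [eq_div_iff (by positivity), one_div, inv_mul_eq_div, div_eq_iff (by positivity)]
    nlinarith [Real.sq_sqrt (show (0:ℝ) ≤ 5 by norm_num)]
  have hst : Real.sin (Real.arctan 2) = 2 * r / 5 := by
    rw [Real.sin_arctan]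
    rw [show (1 : ℝ) + 2 ^ 2 = 5 by norm_num]
    rw [div_eq_iff (by positivity), div_mul_eq_mul_div, eq_div_iff (by norm_num)]
    nlinarith [Real.sq_sqrt (show (0:ℝ) ≤ 5 by norm_num), Real.sqrt_nonneg 5]
  have hc : c ^ 2 = 1 / 2 + r / 10 := by
    have h := Real.cos_sq (Real.arctan 2 / 2)
    rw [show 2 * (Real.arctan 2 / 2) = Real.arctan 2 by ring, hct] at h
    rw [hc', h]; ring
  have hs : s ^ 2 = 1 / 2 - r / 10 := by
    have h := Real.sin_sq (Real.arctan 2 / 2)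
    rw [hs', h, ← hc', hc]; ring
  have hcs : c * s = r / 5 := by
    have := Real.sin_two_mul (Real.arctan 2 / 2)
    rw [show 2 * (Real.arctan 2 / 2) = Real.arctan 2 by ring, hst] at this
    rw [hc', hs']; linarith [this]
  rw [Complex.sq_norm, Complex.normSq_apply]
  simp only [Complex.add_re, Complex.add_im, Complex.mul_re, Complex.mul_im, Complex.neg_re,
    Complex.neg_im, Complex.ofReal_re, Complex.ofReal_im, Complex.I_re, Complex.I_im,
    Complex.zero_re, Complex.zero_im, Complex.one_re, Complex.one_im, Complex.sub_re,
    Complex.sub_im]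
  linear_combination ((-1/1 : ℝ)*s^4*w^4 + (-1/1 : ℝ)*s^4*w^4*r + (-5/2 : ℝ)*c^2*s^2*w^4 + (-7/2 : ℝ)*c^2*s^2*w^4*r + (-3/2 : ℝ)*c^2*s^2*w^4*r^2 + (-1/2 : ℝ)*c^2*s^2*w^4*r^3 + (-9/16 : ℝ)*c^4*w^4 + (3/16 : ℝ)*c^4*w^4*r + (7/8 : ℝ)*c^4*w^4*r^2 + (-1/8 : ℝ)*c^4*w^4*r^3 + (-5/16 : ℝ)*c^4*w^4*r^4 + (-1/16 : ℝ)*c^4*w^4*r^5 + (-1/1 : ℝ)*b^2*s^4*w^4 + (-1/1 : ℝ)*b^2*s^4*w^4*r + (-2/1 : ℝ)*b^2*c^2*s^2*w^4 + (-2/1 : ℝ)*b^2*c^2*s^2*w^4*r + (2/1 : ℝ)*b^2*c^4*w^4*r + (3/1 : ℝ)*b^2*c^4*w^4*r^2 + (1/1 : ℝ)*b^2*c^4*w^4*r^3 + (1/1 : ℝ)*b^4*s^4*w^4 + (1/1 : ℝ)*b^4*s^4*w^4*r + (10/1 : ℝ)*b^4*c^2*s^2*w^4 + (10/1 : ℝ)*b^4*c^2*s^2*w^4*r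 + (-7/1 : ℝ)*b^4*c^4*w^4 + (-7/1 : ℝ)*b^4*c^4*w^4*r + (-4/1 : ℝ)*a*s^4*w^4 + (-10/1 : ℝ)*a*c^2*s^2*w^4 + (-4/1 : ℝ)*a*c^2*s^2*w^4*r + (-2/1 : ℝ)*a*c^2*s^2*w^4*r^2 + (-9/4 : ℝ)*a*c^4*w^4 + (3/1 : ℝ)*a*c^4*w^4*r + (1/2 : ℝ)*a*c^4*w^4*r^2 + (-1/1 : ℝ)*a*c^4*w^4*r^3 + (-1/4 : ℝ)*a*c^4*w^4*r^4 + (-4/1 : ℝ)*a*b^2*s^4*w^4 + (-8/1 : ℝ)*a*b^2*c^2*s^2*w^4 + (8/1 : ℝ)*a*b^2*c^4*w^4*r + (4/1 : ℝ)*a*b^2*c^4*w^4*r^2 + (4/1 : ℝ)*a*b^4*s^4*w^4 + (40/1 : ℝ)*a*b^4*c^2*s^2*w^4 + (-28/1 : ℝ)*a*b^4*c^4*w^4 + (1/1 : ℝ)*a^2*b^2*s^4*w^4 + (1/1 : ℝ)*a^2*b^2*s^4*w^4*r + (10/1 : ℝ)*a^2*b^2*c^2*s^2*w^4 + (10/1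 : ℝ)*a^2*b^2*c^2*s^2*w^4*r + (9/1 : ℝ)*a^2*b^2*c^4*w^4 + (9/1 : ℝ)*a^2*b^2*c^4*w^4*r + (4/1 : ℝ)*a^3*b^2*s^4*w^4 + (40/1 : ℝ)*a^3*b^2*c^2*s^2*w^4 + (36/1 : ℝ)*a^3*b^2*c^4*w^4) * ha + ((4/1 : ℝ)*s^4*w^4 + (10/1 : ℝ)*c^2*s^2*w^4 + (4/1 : ℝ)*c^2*s^2*w^4*r + (2/1 : ℝ)*c^2*s^2*w^4*r^2 + (9/4 : ℝ)*c^4*w^4 + (-3/1 : ℝ)*c^4*w^4*r + (-1/2 : ℝ)*c^4*w^4*r^2 + (1/1 : ℝ)*c^4*w^4*r^3 + (1/4 : ℝ)*c^4*w^4*r^4 + (17/4 : ℝ)*b^2*s^4*w^4 + (1/2 : ℝ)*b^2*s^4*w^4*r + (1/4 : ℝ)*b^2*s^4*w^4*r^2 + (21/2 : ℝ)*b^2*c^2*s^2*w^4 + (5/1 : ℝ)*b^2*c^2*s^2*w^4*r + (5/2 : ℝ)*b^2*c^2*s^2*w^4*r^2 + (9/4 : ℝ)*b^2*c^4*w^4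 + (-7/2 : ℝ)*b^2*c^4*w^4*r + (-7/4 : ℝ)*b^2*c^4*w^4*r^2 + (4/1 : ℝ)*b^4*s^4*w^4 + (8/1 : ℝ)*b^4*c^2*s^2*w^4 + (4/1 : ℝ)*b^4*c^4*w^4) * hb + ((135/128 : ℝ)*w^4 + (-171/128 : ℝ)*w^4*r + (-273/640 : ℝ)*w^4*r^2 + (73/128 : ℝ)*w^4*r^3 + (121/640 : ℝ)*w^4*r^4 + (-21/640 : ℝ)*w^4*r^5 + (-11/640 : ℝ)*w^4*r^6 + (-1/640 : ℝ)*w^4*r^7 + (75/8 : ℝ)*s^2*w^4 + (5/2 : ℝ)*s^2*w^4*r + (3/4 : ℝ)*s^2*w^4*r^2 + (-1/2 : ℝ)*s^2*w^4*r^3 + (-1/8 : ℝ)*s^2*w^4*r^4 + (135/64 : ℝ)*c^2*w^4 + (-99/32 : ℝ)*c^2*w^4*r + (-15/64 : ℝ)*c^2*w^4*r^2 + (19/16 : ℝ)*c^2*w^4*r^3 + (9/64 : ℝ)*c^2*w^4*r^4 + (-3/32 : ℝ)*c^2*w^4*r^5 + (-1/64 : ℝ)*c^2*w^4*r^6) *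 hc + ((105/16 : ℝ)*w^4 + (25/16 : ℝ)*w^4*r + (11/20 : ℝ)*w^4*r^2 + (-3/20 : ℝ)*w^4*r^3 + (-9/80 : ℝ)*w^4*r^4 + (-1/80 : ℝ)*w^4*r^5 + (15/4 : ℝ)*s^2*w^4 + (-1/2 : ℝ)*s^2*w^4*r + (-1/4 : ℝ)*s^2*w^4*r^2) * hs + ((975/512 : ℝ) + (-7/32 : ℝ)*r + (-73/640 : ℝ)*r^2 + (9/160 : ℝ)*r^3 + (353/6400 : ℝ)*r^4 + (3/800 : ℝ)*r^5 + (-17/3200 : ℝ)*r^6 + (-1/800 : ℝ)*r^7 + (-1/12800 : ℝ)*r^8 + (975/256 : ℝ)*w^2 + (-7/16 : ℝ)*w^2*r + (-73/320 : ℝ)*w^2*r^2 + (9/80 : ℝ)*w^2*r^3 + (353/3200 : ℝ)*w^2*r^4 + (3/400 : ℝ)*w^2*r^5 + (-17/1600 : ℝ)*w^2*r^6 + (-1/400 : ℝ)*w^2*r^7 + (-1/6400 : ℝ)*w^2*r^8) * hw + ((49/5120 : ℝ) + (7/320 : ℝ)*r + (341/25600 : ℝ)*r^2 + (-1/800 :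 ℝ)*r^3 + (-73/25600 : ℝ)*r^4 + (-1/1600 : ℝ)*r^5 + (-1/25600 : ℝ)*r^6) * hr
end

section
/- Define a width-2 stochastic program on n variables for AND: for i < n, the i-th instruction applies the identity matrix if x_i = 1 and [[1/2,1/2],[1/2,1/2]] if x_i = 0; the n-th instruction applies [[3/4,0],[1/4,1]] if x_n = 1 and [[3/8,3/8],[5/8,5/8]] if x_n = 0. Starting from the state vector (1,0) and taking the first coordinate of the final vector as the acceptance probability, the program accepts with probability 3/4 if x_i = 1 for all i, and with probability exactly 3/8 otherwise. -/
open Matrix List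

noncomputable def Amat : Matrix (Fin 2) (Fin 2) ℝ := !![1/2, 1/2; 1/2, 1/2]

lemma AA : Amat * Amat = Amat := by
  simp [Amat, Matrix.mul_fin_two]; norm_num

lemma prod_one_or_A (L : List (Matrix (Fin 2) (Fin 2) ℝ))
    (h : ∀ m ∈ L, m = 1 ∨ m = Amat) : L.prod = 1 ∨ L.prod = Amat := by
  induction L with
  | nil => simp
  | cons a t ih =>
    rcases h a (by simp) with rfl | rfl
    · simpa using ih (fun m hm => h m (by simp [hm]))
    · rcases ih (fun m hm => h m (by simp [hm])) with h1 | h1 <;>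
        simp [List.prod_cons, h1, AA]

lemma prod_eq_A (L : List (Matrix (Fin 2) (Fin 2) ℝ))
    (h : ∀ m ∈ L, m = 1 ∨ m = Amat) (hx : ∃ m ∈ L, m = Amat) : L.prod = Amat := by
  induction L with
  | nil => simp at hx
  | cons a t ih =>
    rcases h a (by simp) with rfl | rfl
    · obtain ⟨m, hm, rfl⟩ := hx
      simp only [List.mem_cons] at hm
      rcases hm with h1 | h1
      · exact absurd h1.symm (by intro h2; have := congrFun (congrFun h2 0) 0; simp [Amat] at this)
      · simpa using ih (fun m hm => h m (by simp [hm])) ⟨_, h1, rfl⟩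
    · rcases prod_one_or_A t (fun m hm => h m (by simp [hm])) with h1 | h1 <;>
        simp [List.prod_cons, h1, AA]

lemma finRange_snoc (m : ℕ) :
    List.finRange (m+1) = ((List.finRange m).map Fin.castSucc) ++ [Fin.last m] := by
  rw [← List.ofFn_id (m+1), List.ofFn_succ', List.concat_eq_append]
  congr 1
  exact List.ofFn_eq_map

theorem width2_stochastic_AND (n : ℕ) (hn : 0 < n) (x : Fin n → Bool) :
    let M : Fin n → Bool → Matrix (Fin 2) (Fin 2) ℝ := fun i v =>
      if (i : ℕ) = n - 1 then
        (if v then !![3/4, 0; 1/4, 1] else !![3/8, 3/8; 5/8, 5/8])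
      else
        (if v then 1 else !![1/2, 1/2; 1/2, 1/2])
    let P : Matrix (Fin 2) (Fin 2) ℝ :=
      (((List.finRange n).reverse.map (fun i => M i (x i))).prod)
    let accProb : ℝ := P.mulVec (fun j => if j = 0 then 1 else 0) 0
    ((∀ i, x i = true) → accProb = 3 / 4) ∧
    ((¬ ∀ i, x i = true) → accProb = 3 / 8) := by
  intro M P accProb
  obtain ⟨m, rfl⟩ : ∃ m, n = m + 1 := ⟨n - 1, (Nat.succ_pred_eq_of_pos hn).symm⟩
  set L := (((List.finRange m).map Fin.castSucc).reverse.map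
      (fun i => M i (x i)) : List (Matrix (Fin 2) (Fin 2) ℝ)) with hL
  have hsplit : P = M (Fin.last m) (x (Fin.last m)) * L.prod := by
    show (((List.finRange (m+1)).reverse.map _).prod) = _
    rw [finRange_snoc, List.reverse_append]
    simp [hL]
  have hMj : ∀ j : Fin m, M (Fin.castSucc j) (x (Fin.castSucc j))
      = if x (Fin.castSucc j) then 1 else Amat := by
    intro j
    have hne : (j : ℕ) ≠ m := j.isLt.ne
    cases hxj : x (Fin.castSucc j) <;> simp [M, hne, Amat]
  have hmem : ∀ mm ∈ L, mm = 1 ∨ mm = Amat := by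
    intro mm hmm
    rw [hL, List.mem_map] at hmm
    obtain ⟨i, hi, rfl⟩ := hmm
    rw [List.mem_reverse, List.mem_map] at hi
    obtain ⟨j, _, rfl⟩ := hi
    rw [hMj j]
    cases x (Fin.castSucc j) <;> simp
  have hlastM : ∀ v, M (Fin.last m) v
      = if v then !![3/4, 0; 1/4, 1] else !![3/8, 3/8; 5/8, 5/8] := by
    intro v; simp [M]
  by_cases hall : ∀ j : Fin m, x (Fin.castSucc j) = true
  · have hLprod : L.prod = 1 := by
      apply List.prod_eq_one
      intro mm hmm
      rw [hL, List.mem_map] at hmm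
      obtain ⟨i, hi, rfl⟩ := hmm
      rw [List.mem_reverse, List.mem_map] at hi
      obtain ⟨j, _, rfl⟩ := hi
      rw [hMj j, hall j]; simp
    constructor
    · intro hx
      have hP : P = !![3/4, 0; 1/4, 1] := by
        rw [hsplit, hLprod, mul_one, hlastM, hx (Fin.last m)]; simp
      show P.mulVec _ 0 = 3/4
      rw [hP]; simp [Matrix.mulVec, dotProduct, Fin.sum_univ_two]
    · intro hx
      have hxl : x (Fin.last m) = false := by
        by_contra h
        apply hx
        intro i
        rcases Fin.eq_castSucc_or_eq_last i with ⟨j, rfl⟩ | rfl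
        · exact hall j
        · simpa using h
      have hP : P = !![3/8, 3/8; 5/8, 5/8] := by
        rw [hsplit, hLprod, mul_one, hlastM, hxl]; simp
      show P.mulVec _ 0 = 3/8
      rw [hP]; simp [Matrix.mulVec, dotProduct, Fin.sum_univ_two]
  · push_neg at hall
    obtain ⟨j, hj⟩ := hall
    have hLprod : L.prod = Amat := by
      apply prod_eq_A L hmem
      refine ⟨M (Fin.castSucc j) (x (Fin.castSucc j)), ?_, ?_⟩
      · rw [hL]
        exact List.mem_map_of_mem (by simp)
      · rw [hMj j, Bool.eq_false_iff.mpr hj]; simp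
    constructor
    · intro hx
      exact absurd (hx (Fin.castSucc j)) hj
    · intro _
      show P.mulVec _ 0 = 3/8
      rw [hsplit, hLprod, hlastM]
      cases x (Fin.last m) <;>
        · simp only [if_true, if_false, Bool.false_eq_true]
          simp [Amat, Matrix.mul_fin_two, Matrix.mulVec, dotProduct, Fin.sum_univ_two]
          norm_num
end
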